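/- Let κ and θ be cardinals and λ an infinite cardinal, and suppose that every commutative cancellative semigroup of cardinality κ satisfies G ↛ [λ]^{FS₂}_θ. Then for every commutative cancellative semigroup G of cardinality κ there exists a single colouring c : G → θ that simultaneously witnesses G ↛ [λ]^{FSₙ}_θ for all integers n ≥ 2; that is, for every integer n ≥ 2, every X ⊆ G of cardinality λ, and every δ < θ, there are n pairwise distinct elements x₁, …, xₙ ∈ X with c(x₁ + ⋯ + xₙ) = δ. -/

import Mathlib

/-!
Embed `G` into an abelian group `D` of the same cardinality in which every element is halvable,
and colour `g ∈ G` by an FS₂-colouring of `D` at the image of `g`. Given `X` of size `λ` and `n`,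
fix distinct `a₁, …, aₙ ∈ X` and write `a₁ + ⋯ + aₙ = 2t` in `D`. The FS₂ property applied to the
translate `{x + t : x ∈ X \ {a₁, …, aₙ}}` yields `x ≠ y` with `(x + t) + (y + t)`, that is
`a₁ + ⋯ + aₙ + x + y`, of the prescribed colour.
-/

open Cardinal

universe u

/-- Sum of `n+1` elements of an additive commutative semigroup. -/
def sgSum {G : Type*} [AddCommSemigroup G] : (n : ℕ) → (Fin (n + 1) → G) → G
  | 0, x => x 0
  | n + 1, x => sgSum n (fun i => x i.castSucc) + x (Fin.last (n + 1))

theorem map_sgSum {G M : Type*} [AddCommSemigroup G] [AddCommMonoid M] (f : G →ₙ+ M) :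
    ∀ (n : ℕ) (x : Fin (n + 1) → G), f (sgSum n x) = ∑ i, f (x i)
  | 0, x => by simp [sgSum]
  | n + 1, x => by rw [sgSum, map_add, map_sgSum f n, Fin.sum_univ_castSucc (n := n + 1)]

noncomputable def toGrothendieckAddGroup {G : Type u} [AddCommSemigroup G] :
    G →ₙ+ Algebra.GrothendieckAddGroup (WithZero G) :=
  Algebra.GrothendieckAddGroup.of.toAddHom.comp WithZero.coeAddHom

/- `WithZero G` is not cancellative when `G` already has a neutral element, but the
localization only identifies `a` and `b` when `c + a = c + b`, and `c` is `0` or comes from `G`. -/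
theorem toGrothendieckAddGroup_injective {G : Type u} [AddCommSemigroup G] [IsLeftCancelAdd G] :
    Function.Injective (toGrothendieckAddGroup (G := G)) := by
  intro a b h
  obtain ⟨⟨c, _⟩, hc⟩ := (AddLocalization.addMonoidOf ⊤).exists_of_eq h
  cases c with
  | zero => simpa using hc
  | coe c => exact add_left_cancel (WithZero.coe_inj.1 hc)

section HalvingHull

variable {G : Type u} {A : Type*} [AddCommSemigroup G] [AddCommGroup A] (f : G →ₙ+ A)

namespace HalvingHull

noncomputable def evalInt : (G →₀ ℤ) →+ A :=
  Finsupp.liftAddHom fun g => zmultiplesHom A (f g)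

noncomputable def castRat {α : Type*} : (α →₀ ℤ) →+ (α →₀ ℚ) :=
  Finsupp.mapRange.addMonoidHom (Int.castAddHom ℚ)

theorem castRat_injective {α : Type*} : Function.Injective (castRat (α := α)) :=
  Finsupp.mapRange_injective _ (map_zero _) Int.cast_injective

@[simp] theorem castRat_single {α : Type*} (a : α) (n : ℤ) :
    castRat (Finsupp.single a n) = Finsupp.single a (n : ℚ) := by
  simp [castRat]

@[simp] theorem evalInt_single (g : G) (n : ℤ) : evalInt f (Finsupp.single g n) = n • f g := by
  simp [evalInt]

end HalvingHull

/- The pushout of `A ← ℤ[G] → ℚ[G]`: its elements are halvable because those of `ℚ[G]` are, and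
`G` still embeds because `ℤ[G] → ℚ[G]` is injective. -/
abbrev HalvingHull : Type u :=
  (G →₀ ℚ) ⧸ (HalvingHull.evalInt f).ker.map HalvingHull.castRat

namespace HalvingHull

theorem mk_castRat_eq_iff (p q : G →₀ ℤ) :
    (QuotientAddGroup.mk (castRat p) : HalvingHull f) = QuotientAddGroup.mk (castRat q) ↔
      evalInt f p = evalInt f q := by
  rw [QuotientAddGroup.eq, ← map_neg, ← map_add, AddSubgroup.mem_map_iff_mem castRat_injective,
    AddMonoidHom.mem_ker, map_add, map_neg, neg_add_eq_zero]

noncomputable def of : G →ₙ+ HalvingHull f where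
  toFun g := QuotientAddGroup.mk (castRat (Finsupp.single g 1))
  map_add' a b := by
    rw [← QuotientAddGroup.mk_add, ← map_add]
    exact (mk_castRat_eq_iff f _ _).2 (by simp)

variable {f} in
theorem of_injective (hf : Function.Injective f) : Function.Injective (of f) :=
  fun a b h => hf (by simpa using (mk_castRat_eq_iff f _ _).1 h)

theorem exists_add_self_eq (d : HalvingHull f) : ∃ h, h + h = d := by
  obtain ⟨p, rfl⟩ := QuotientAddGroup.mk_surjective d
  refine ⟨QuotientAddGroup.mk ((2 : ℚ)⁻¹ • p), ?_⟩
  rw [← QuotientAddGroup.mk_add, ← add_smul]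
  norm_num

theorem mk_le [Nonempty G] : #(HalvingHull f) ≤ max #G ℵ₀ :=
  calc #(HalvingHull f) ≤ #(G →₀ ℚ) := mk_le_of_surjective QuotientAddGroup.mk_surjective
    _ = max #G ℵ₀ := by simp [mk_finsupp_lift_of_infinite']

end HalvingHull

end HalvingHull

theorem Cardinal.mk_sdiff_of_finite {α : Type*} {X s : Set α} (hX : ℵ₀ ≤ #X) (hs : s.Finite) :
    #(X \ s : Set α) = #X := by
  refine le_antisymm (mk_le_mk_of_subset Set.sdiff_subset) (not_lt.1 fun hlt => ?_)
  exact (le_mk_sdiff_add_mk X s).not_gt (add_lt_of_lt hX hlt (hs.lt_aleph0.trans_le hX))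

theorem exists_injective_mem_colour_sgSum_eq {G D : Type u} {C : Type*} [AddCommSemigroup G]
    [AddCancelCommMonoid D] (ι : G →ₙ+ D) (hι : Function.Injective ι)
    (half : ∀ d : D, ∃ h, h + h = d) {lam : Cardinal} (hlam : ℵ₀ ≤ lam) (c : D → C)
    (hc : ∀ Y : Set D, #Y = lam → ∀ δ, ∃ u ∈ Y, ∃ v ∈ Y, u ≠ v ∧ c (u + v) = δ)
    (n : ℕ) (X : Set G) (hX : #X = lam) (δ : C) :
    ∃ x : Fin (n + 2) → G, Function.Injective x ∧ (∀ i, x i ∈ X) ∧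
      c (ι (sgSum (n + 1) x)) = δ := by
  have : Infinite X := infinite_iff.2 (hX ▸ hlam)
  let a : Fin n → G := fun i => Infinite.natEmbedding X i
  have ha_inj : Function.Injective a := fun i j h =>
    Fin.ext ((Infinite.natEmbedding X).injective (Subtype.ext h))
  have ha_mem : Set.range a ⊆ X := Set.range_subset_iff.2 fun i => (Infinite.natEmbedding X i).2
  obtain ⟨t, ht⟩ := half (∑ i, ι (a i))
  have hshift : Function.Injective (ι · + t) := (add_left_injective t).comp hι
  have hY : #((ι · + t) '' (X \ Set.range a)) = lam := by
    rw [mk_image_eq hshift, mk_sdiff_of_finite (hX ▸ hlam) (Set.finite_range a), hX]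
  obtain ⟨_, ⟨x, hx, rfl⟩, _, ⟨y, hy, rfl⟩, hne, hcxy⟩ := hc _ hY δ
  have hxy : x ≠ y := fun h => hne (by rw [h])
  refine ⟨Fin.snoc (Fin.snoc a x) y, ?_, ?_, ?_⟩
  · refine Fin.snoc_injective_of_injective (Fin.snoc_injective_of_injective ha_inj hx.2) ?_
    simpa [Fin.range_snoc, hxy.symm] using hy.2
  · simpa [← Set.range_subset_iff, Fin.range_snoc, Set.insert_subset_iff, hx.1, hy.1] using ha_mem
  · rw [map_sgSum, Fin.sum_univ_castSucc, Fin.sum_univ_castSucc]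
    simp only [Fin.snoc_castSucc, Fin.snoc_last, ← ht]
    convert hcxy using 2
    dsimp only
    ac_rfl

theorem stmt_15 (κ lam θ : Cardinal.{u}) (hlam : ℵ₀ ≤ lam)
    (hyp : ∀ (H : Type u) [AddCommSemigroup H],
      (∀ a b c : H, a + c = b + c → a = b) → Cardinal.mk H = κ →
      ∃ c : H → θ.ord.ToType,
        ∀ X : Set H, Cardinal.mk X = lam →
          ∀ δ : θ.ord.ToType, ∃ x ∈ X, ∃ y ∈ X, x ≠ y ∧ c (x + y) = δ)
    (G : Type u) [AddCommSemigroup G]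
    (hcancel : ∀ a b c : G, a + c = b + c → a = b)
    (hcard : Cardinal.mk G = κ) :
    ∃ c : G → θ.ord.ToType,
      ∀ (n : ℕ) (X : Set G), Cardinal.mk X = lam →
        ∀ δ : θ.ord.ToType,
          ∃ x : Fin (n + 2) → G, Function.Injective x ∧
            (∀ i, x i ∈ X) ∧ c (sgSum (n + 1) x) = δ := by
  by_cases hG : lam ≤ #G
  · have : Infinite G := infinite_iff.2 (hlam.trans hG)
    have : IsRightCancelAdd G := ⟨fun a b c h => hcancel b c a h⟩
    have : IsCancelAdd G := AddCommMagma.IsRightCancelAdd.toIsCancelAdd G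
    let ι := HalvingHull.of (toGrothendieckAddGroup (G := G))
    have hι : Function.Injective ι := HalvingHull.of_injective toGrothendieckAddGroup_injective
    have hD : #(HalvingHull (toGrothendieckAddGroup (G := G))) = κ := by
      refine le_antisymm ?_ (hcard ▸ mk_le_of_injective hι)
      calc _ ≤ max #G ℵ₀ := HalvingHull.mk_le _
        _ = κ := by rw [max_eq_left (hlam.trans hG), hcard]
    obtain ⟨c, hc⟩ := hyp _ (fun _ _ _ => add_right_cancel) hD
    exact ⟨c ∘ ι, exists_injective_mem_colour_sgSum_eq ι hι (HalvingHull.exists_add_self_eq _)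
      hlam c hc⟩
  · obtain ⟨c, -⟩ := hyp G hcancel hcard
    exact ⟨c, fun n X hX => absurd (hX ▸ mk_set_le X) hG⟩
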